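/- arXiv:2008.10840 — 4 statements merged into one kernel-verified Lean document; each statement's English description precedes it below -/
import Mathlib

section
/- Let A be a positive bounded operator on a complex Hilbert space H, inducing the semi-inner product ⟨x,y⟩_A = ⟨Ax,y⟩ and seminorm ‖x‖_A. If T is a bounded operator such that AT is a positive operator, then for every x ∈ H with ‖x‖_A = 1 and every natural number r ≥ 1, ⟨Tx,x⟩_A^r ≤ ⟨T^r x, x⟩_A, where T^r denotes the r-th power of T. -/
open scoped InnerProductSpace
open ContinuousLinearMap
noncomputable section
set_option synthInstance.maxHeartbeats 1000000
set_option maxHeartbeats 1000000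

/-- Cauchy–Schwarz for the semi-inner product induced by a positive operator. -/
lemma pos_cauchy_schwarz {H : Type*} [NormedAddCommGroup H] [InnerProductSpace ℂ H]
    [CompleteSpace H] (S : H →L[ℂ] H) (hS : S.IsPositive) (u v : H) :
    ‖⟪S u, v⟫_ℂ‖ ^ 2 ≤ (⟪S u, u⟫_ℂ).re * (⟪S v, v⟫_ℂ).re := by
  have h0 : (0 : H →L[ℂ] H) ≤ S := (ContinuousLinearMap.nonneg_iff_isPositive S).2 hS
  set R := CFC.sqrt S with hRdef
  have hR : R * R = S := CFC.sqrt_mul_sqrt_self S h0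
  have hRpos : (0 : H →L[ℂ] H) ≤ R := CFC.sqrt_nonneg S
  have hRsa : IsSelfAdjoint R := IsSelfAdjoint.of_nonneg hRpos
  have hsymm := (ContinuousLinearMap.isSelfAdjoint_iff_isSymmetric.mp hRsa)
  have key : ∀ w z : H, ⟪S w, z⟫_ℂ = ⟪R w, R z⟫_ℂ := by
    intro w z
    rw [← hR]
    exact hsymm (R w) z
  rw [key u v, key u u, key v v]
  have h1 := inner_mul_inner_self_le (𝕜 := ℂ) (R u) (R v)
  simp only [RCLike.re_to_complex] at h1
  have hnorm : ‖⟪R v, R u⟫_ℂ‖ = ‖⟪R u, R v⟫_ℂ‖ := norm_inner_symm _ _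
  nlinarith [h1, norm_nonneg (⟪R u, R v⟫_ℂ)]

theorem A_positive_power_ineq {H : Type*} [NormedAddCommGroup H] [InnerProductSpace ℂ H]
    [CompleteSpace H] (A T : H →L[ℂ] H) (hA : A.IsPositive) (hAT : (A * T).IsPositive)
    (x : H) (hx : Real.sqrt ((⟪A x, x⟫_ℂ).re) = 1) (r : ℕ) (hr : 1 ≤ r) :
    ((⟪A (T x), x⟫_ℂ).re) ^ r ≤ (⟪A ((T ^ r) x), x⟫_ℂ).re := by
  set p : ℕ → ℝ := fun k => (⟪A ((T ^ k) x), x⟫_ℂ).re with hp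
  have hAsymm := (ContinuousLinearMap.isSelfAdjoint_iff_isSymmetric.mp hA.isSelfAdjoint)
  have hATsymm := (ContinuousLinearMap.isSelfAdjoint_iff_isSymmetric.mp hAT.isSelfAdjoint)
  -- key commutation relation
  have move : ∀ u v : H, ⟪A (T u), v⟫_ℂ = ⟪A u, T v⟫_ℂ := by
    intro u v
    have h1 : ⟪(A * T) u, v⟫_ℂ = ⟪u, (A * T) v⟫_ℂ := hATsymm u v
    have h2 : ⟪u, A (T v)⟫_ℂ = ⟪A u, T v⟫_ℂ := (hAsymm u (T v)).symm
    simpa [ContinuousLinearMap.mul_apply, h2] using h1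
  have powsucc : ∀ (k : ℕ) (v : H), (T ^ (k + 1)) v = T ((T ^ k) v) := by
    intro k v
    rw [pow_succ']
    simp [ContinuousLinearMap.mul_apply]
  -- shift lemma
  have shift : ∀ (b a : ℕ) (v : H),
      ⟪A ((T ^ (a + b)) x), v⟫_ℂ = ⟪A ((T ^ a) x), (T ^ b) v⟫_ℂ := by
    intro b
    induction b with
    | zero => intro a v; simp
    | succ n ih =>
      intro a v
      have e : a + (n + 1) = (a + 1) + n := by ring
      rw [e, ih (a + 1) v, powsucc a x, move, ← powsucc n v]
  -- even and odd representations
  have even_rep : ∀ a : ℕ, (⟪A ((T ^ (a + a)) x), x⟫_ℂ) = ⟪A ((T ^ a) x), (T ^ a) x⟫_ℂ :=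
    fun a => shift a a x
  have odd_rep : ∀ a : ℕ, (⟪A ((T ^ (a + a + 1)) x), x⟫_ℂ)
      = ⟪(A * T) ((T ^ a) x), (T ^ a) x⟫_ℂ := by
    intro a
    have : a + a + 1 = (a + 1) + a := by ring
    rw [this, shift a (a + 1) x, powsucc a x]
    simp [ContinuousLinearMap.mul_apply]
  -- nonnegativity of all p k
  have hpnn : ∀ k : ℕ, 0 ≤ p k := by
    intro k
    rcases Nat.even_or_odd k with ⟨a, ha⟩ | ⟨a, ha⟩
    · subst ha
      have := hA.inner_nonneg_left ((T ^ a) x)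
      simp only [hp]
      rw [even_rep a]
      simpa using (Complex.le_def.mp this).1
    · subst ha
      have := hAT.inner_nonneg_left ((T ^ a) x)
      simp only [hp]
      rw [show 2*a+1 = a+a+1 by ring, odd_rep a]
      simpa using (Complex.le_def.mp this).1
  -- (re z)^2 ≤ ‖z‖^2
  have resq : ∀ z : ℂ, (z.re) ^ 2 ≤ ‖z‖ ^ 2 := by
    intro z
    have h1 : |z.re| ≤ ‖z‖ := Complex.abs_re_le_norm z
    nlinarith [abs_nonneg z.re, sq_abs z.re]
  -- log-convexity
  have lc : ∀ m : ℕ, p (m + 1) ^ 2 ≤ p m * p (m + 2) := by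
    intro m
    rcases Nat.even_or_odd m with ⟨a, ha⟩ | ⟨a, ha⟩
    · subst ha
      -- m+1 = (a+1) + a
      have e1 : a + a + 1 = (a + 1) + a := by ring
      have hz : (⟪A ((T ^ (a + a + 1)) x), x⟫_ℂ) = ⟪A ((T ^ (a + 1)) x), (T ^ a) x⟫_ℂ := by
        rw [e1, shift a (a + 1) x]
      have cs := pos_cauchy_schwarz A hA ((T ^ (a + 1)) x) ((T ^ a) x)
      have hre := resq (⟪A ((T ^ (a + 1)) x), (T ^ a) x⟫_ℂ)
      have h1 : p (a + a + 1) ^ 2 ≤ (⟪A ((T ^ (a+1)) x), (T ^ (a+1)) x⟫_ℂ).re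
          * (⟪A ((T ^ a) x), (T ^ a) x⟫_ℂ).re := by
        simp only [hp]
        rw [hz]
        exact le_trans hre cs
      have e2 : (⟪A ((T ^ (a+1)) x), (T ^ (a+1)) x⟫_ℂ) = ⟪A ((T ^ (a + a + 2)) x), x⟫_ℂ := by
        rw [show a + a + 2 = (a+1) + (a+1) by ring]; exact (even_rep (a+1)).symm
      have e3 : (⟪A ((T ^ a) x), (T ^ a) x⟫_ℂ) = ⟪A ((T ^ (a + a)) x), x⟫_ℂ :=
        (even_rep a).symm
      rw [e2, e3] at h1
      simp only [hp] at h1 ⊢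
      calc (⟪A ((T ^ (a + a + 1)) x), x⟫_ℂ).re ^ 2
          ≤ (⟪A ((T ^ (a + a + 2)) x), x⟫_ℂ).re * (⟪A ((T ^ (a + a)) x), x⟫_ℂ).re := h1
        _ = (⟪A ((T ^ (a + a)) x), x⟫_ℂ).re * (⟪A ((T ^ (a + a + 2)) x), x⟫_ℂ).re := by ring
    · subst ha
      -- m = 2a+1, m+1 = 2a+2 even
      have hz : (⟪(A * T) ((T ^ a) x), (T ^ (a + 1)) x⟫_ℂ)
          = ⟪A ((T ^ (2 * a + 2)) x), x⟫_ℂ := by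
        have : (A * T) ((T ^ a) x) = A ((T ^ (a + 1)) x) := by
          simp [ContinuousLinearMap.mul_apply, powsucc a x]
        rw [this, show 2 * a + 2 = (a + 1) + (a + 1) by ring, shift (a+1) (a+1) x]
      have cs := pos_cauchy_schwarz (A * T) hAT ((T ^ a) x) ((T ^ (a + 1)) x)
      have hre := resq (⟪(A * T) ((T ^ a) x), (T ^ (a + 1)) x⟫_ℂ)
      have e4 : (⟪(A * T) ((T ^ a) x), (T ^ a) x⟫_ℂ) = ⟪A ((T ^ (a + a + 1)) x), x⟫_ℂ :=
        (odd_rep a).symm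
      have e5 : (⟪(A * T) ((T ^ (a+1)) x), (T ^ (a+1)) x⟫_ℂ)
          = ⟪A ((T ^ (2 * a + 3)) x), x⟫_ℂ := by
        rw [show 2 * a + 3 = (a+1) + (a+1) + 1 by ring]; exact (odd_rep (a+1)).symm
      rw [e4, e5] at cs
      have h1 : (⟪A ((T ^ (2*a+2)) x), x⟫_ℂ).re ^ 2
          ≤ (⟪A ((T ^ (a + a + 1)) x), x⟫_ℂ).re * (⟪A ((T ^ (2*a+3)) x), x⟫_ℂ).re := by
        rw [← hz]
        exact le_trans hre cs
      simp only [hp]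
      rw [show 2*a+1+1 = 2*a+2 by ring, show 2*a+1+2 = 2*a+3 by ring,
        show 2*a+1 = a+a+1 by ring]
      exact h1
  -- p 0 = 1
  have hp0 : p 0 = 1 := by
    have h0 : 0 ≤ (⟪A x, x⟫_ℂ).re := by simpa using (Complex.le_def.mp (hA.inner_nonneg_left x)).1
    have := congrArg (fun t => t ^ 2) hx
    simp only [Real.sq_sqrt h0, one_pow] at this
    simpa [hp] using this
  -- main induction
  have main : p 1 ^ r ≤ p r := by
    rcases eq_or_lt_of_le (hpnn 1) with h10 | h1pos
    · have : p 1 ^ r = 0 := by rw [← h10]; exact zero_pow (by omega)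
      rw [this]; exact hpnn r
    · have step : ∀ k : ℕ, 0 < p k ∧ p 1 * p k ≤ p (k + 1) := by
        intro k
        induction k with
        | zero => exact ⟨by rw [hp0]; norm_num, by rw [hp0]; simp⟩
        | succ n ih =>
          obtain ⟨hpos, hle⟩ := ih
          have hpos' : 0 < p (n + 1) := lt_of_lt_of_le (by positivity) hle
          refine ⟨hpos', ?_⟩
          have := lc n
          nlinarith [hpnn (n + 2)]
      have pow_le : ∀ k : ℕ, p 1 ^ (k + 1) ≤ p (k + 1) := by
        intro k
        induction k with
        | zero => simp
        | succ n ih =>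
          have h2 := (step (n + 1)).2
          calc p 1 ^ (n + 2) = p 1 * p 1 ^ (n + 1) := by ring
          _ ≤ p 1 * p (n + 1) := by
              exact mul_le_mul_of_nonneg_left ih (le_of_lt h1pos)
          _ ≤ p (n + 2) := h2
      obtain ⟨k, hk⟩ := Nat.exists_eq_add_of_le hr
      rw [hk, Nat.add_comm 1 k]
      exact pow_le k
  have hT1 : (⟪A (T x), x⟫_ℂ).re = p 1 := by simp [hp]
  rw [hT1]
  exact main
end
end

section
/- Let A be a positive bounded operator on a complex Hilbert space H with semi-inner product ⟨x,y⟩_A = ⟨Ax,y⟩ and seminorm ‖·‖_A. Then for all a, b, e ∈ H with ‖e‖_A = 1, |⟨a,e⟩_A · ⟨e,b⟩_A| ≤ (1/2)·(|⟨a,b⟩_A| + ‖a‖_A·‖b‖_A). -/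
/-!
Reflecting `a` in the line through the unit vector `e` gives `x = 2⟪e, a⟫ e - a`, which has the
same seminorm as `a` and satisfies `⟪x, b⟫ + ⟪a, b⟫ = 2 ⟪a, e⟫ ⟪e, b⟫`. Cauchy–Schwarz for `⟪x, b⟫`
and the triangle inequality then give Buzano's inequality in every semi-inner product space, and
`⟪A x, y⟫` is one.
-/

open scoped InnerProductSpace ComplexConjugate

section Buzano

variable {𝕜 F : Type*} [RCLike 𝕜] [SeminormedAddCommGroup F] [InnerProductSpace 𝕜 F]

open RCLike

lemma norm_two_inner_smul_sub_self {e : F} (he : ‖e‖ = 1) (a : F) :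
    ‖(2 * ⟪e, a⟫_𝕜) • e - a‖ = ‖a‖ := by
  have hsq : ‖(2 * ⟪e, a⟫_𝕜) • e - a‖ ^ 2 = ‖a‖ ^ 2 := by
    have hre : re (conj (2 * ⟪e, a⟫_𝕜) * ⟪e, a⟫_𝕜) = 2 * ‖⟪e, a⟫_𝕜‖ ^ 2 := by
      rw [(starRingEnd 𝕜).map_mul, mul_assoc, RCLike.conj_mul, map_ofNat]
      norm_cast
    rw [@norm_sub_sq 𝕜, norm_smul, he, inner_smul_left, hre, norm_mul, RCLike.norm_ofNat]
    ring
  exact (pow_left_inj₀ (norm_nonneg _) (norm_nonneg _) two_ne_zero).mp hsq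

theorem norm_inner_mul_inner_le_of_norm_eq_one {e : F} (he : ‖e‖ = 1) (a b : F) :
    ‖⟪a, e⟫_𝕜 * ⟪e, b⟫_𝕜‖ ≤ (1 / 2) * (‖⟪a, b⟫_𝕜‖ + ‖a‖ * ‖b‖) := by
  set x := (2 * ⟪e, a⟫_𝕜) • e - a
  have hx : ⟪x, b⟫_𝕜 + ⟪a, b⟫_𝕜 = 2 * (⟪a, e⟫_𝕜 * ⟪e, b⟫_𝕜) := by
    simp only [x, inner_sub_left, inner_smul_left, map_mul, map_ofNat, inner_conj_symm]
    ring
  calc ‖⟪a, e⟫_𝕜 * ⟪e, b⟫_𝕜‖ = (1 / 2) * ‖⟪x, b⟫_𝕜 + ⟪a, b⟫_𝕜‖ := by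
        rw [hx, norm_mul (2 : 𝕜), RCLike.norm_ofNat]; ring
    _ ≤ (1 / 2) * (‖x‖ * ‖b‖ + ‖⟪a, b⟫_𝕜‖) := by
        gcongr
        exact (norm_add_le _ _).trans (add_le_add_left (norm_inner_le_norm x b) _)
    _ = (1 / 2) * (‖⟪a, b⟫_𝕜‖ + ‖a‖ * ‖b‖) := by
        rw [norm_two_inner_smul_sub_self he, add_comm]

end Buzano

namespace ContinuousLinearMap.IsPositive

variable {𝕜 E : Type*} [RCLike 𝕜] [NormedAddCommGroup E] [InnerProductSpace 𝕜 E]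
  {A : E →L[𝕜] E}

abbrev preInnerProductCore (hA : A.IsPositive) : PreInnerProductSpace.Core 𝕜 E where
  inner x y := ⟪A x, y⟫_𝕜
  conj_inner_symm x y := by rw [inner_conj_symm, hA.inner_left_eq_inner_right]
  re_inner_nonneg := hA.re_inner_nonneg_left
  add_left x y z := by rw [map_add, inner_add_left]
  smul_left x y r := by rw [map_smul, inner_smul_left]

end ContinuousLinearMap.IsPositive

theorem semi_buzano_inequality_general {H : Type*} [NormedAddCommGroup H] [InnerProductSpace ℂ H]
    (A : H →L[ℂ] H) (hA : A.IsPositive) (a b e : H)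
    (he : Real.sqrt ((⟪A e, e⟫_ℂ).re) = 1) :
    ‖(⟪A a, e⟫_ℂ) * (⟪A e, b⟫_ℂ)‖ ≤
      (1 / 2) * (‖(⟪A a, b⟫_ℂ)‖ +
        Real.sqrt ((⟪A a, a⟫_ℂ).re) * Real.sqrt ((⟪A b, b⟫_ℂ).re)) :=
  -- In the semi-inner product space of `A`, `‖e‖` unfolds to `√(re ⟪A e, e⟫)`, so `he` applies as is.
  @norm_inner_mul_inner_le_of_norm_eq_one ℂ H _
    (@InnerProductSpace.Core.toSeminormedAddCommGroup ℂ H _ _ _ hA.preInnerProductCore)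
    (InnerProductSpace.ofCore hA.preInnerProductCore) e he a b

theorem semi_buzano_inequality {H : Type*} [NormedAddCommGroup H] [InnerProductSpace ℂ H]
    [CompleteSpace H] (A : H →L[ℂ] H) (hA : A.IsPositive) (a b e : H)
    (he : Real.sqrt ((⟪A e, e⟫_ℂ).re) = 1) :
    ‖(⟪A a, e⟫_ℂ) * (⟪A e, b⟫_ℂ)‖ ≤
      (1 / 2) * (‖(⟪A a, b⟫_ℂ)‖ +
        Real.sqrt ((⟪A a, a⟫_ℂ).re) * Real.sqrt ((⟪A b, b⟫_ℂ).re)) :=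
  semi_buzano_inequality_general A hA a b e he
end

section
/- Let T be a bounded operator on a complex Hilbert space H, w(T) = sup{|⟨Tx,x⟩| : ‖x‖=1} its numerical radius, and T* its adjoint. Then for every real r ≥ 1, w(T)^(2r) ≤ (1/2)·w(T²)^r + (1/2^(r+1))·‖T T* + T* T‖^r. -/
open scoped InnerProductSpace
open ContinuousLinearMap
noncomputable section
set_option synthInstance.maxHeartbeats 1000000
set_option maxHeartbeats 1000000

variable {H : Type*} [NormedAddCommGroup H] [InnerProductSpace ℂ H] [CompleteSpace H]

/-- The numerical radius of a bounded operator. -/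
noncomputable def numRadius (T : H →L[ℂ] H) : ℝ :=
  sSup {r : ℝ | ∃ x : H, ‖x‖ = 1 ∧ r = ‖(⟪T x, x⟫_ℂ)‖}

/-- The 2×2 block operator [[X, Y],[Z, W]] on H ⊕ H (ℓ² direct sum). -/
noncomputable def blockOp (X Y Z W : H →L[ℂ] H) :
    WithLp 2 (H × H) →L[ℂ] WithLp 2 (H × H) :=
  ((WithLp.prodContinuousLinearEquiv 2 ℂ H H).symm.toContinuousLinearMap) ∘L
    ((X ∘L ContinuousLinearMap.fst ℂ H H + Y ∘L ContinuousLinearMap.snd ℂ H H).prod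
      (Z ∘L ContinuousLinearMap.fst ℂ H H + W ∘L ContinuousLinearMap.snd ℂ H H)) ∘L
    ((WithLp.prodContinuousLinearEquiv 2 ℂ H H).toContinuousLinearMap)

/-!
Reflecting `b` in the line through a unit vector `e` gives Buzano's inequality
`2 |⟪a, e⟫⟪e, b⟫| ≤ ‖a‖‖b‖ + |⟪a, b⟫|`. Applied to `a = T x`, `b = T* x`, `e = x`, and combined
with `2 ‖T x‖‖T* x‖ ≤ ‖T x‖² + ‖T* x‖² = re ⟪(T T* + T* T) x, x⟫`, it yields the case `r = 1`:
`w(T)² ≤ w(T²)/2 + ‖T T* + T* T‖/4`. The general case follows by raising this to the power `r`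
and applying convexity of `t ↦ t ^ r` to the midpoint of `w(T²)` and `‖T T* + T* T‖/2`.
-/

section InnerProductSpace

variable {𝕜 E : Type*} [RCLike 𝕜] [NormedAddCommGroup E] [InnerProductSpace 𝕜 E]

theorem two_mul_norm_inner_mul_inner_le {e : E} (he : ‖e‖ = 1) (a b : E) :
    2 * ‖⟪a, e⟫_𝕜 * ⟪e, b⟫_𝕜‖ ≤ ‖a‖ * ‖b‖ + ‖⟪a, b⟫_𝕜‖ := by
  have h_reflect : ⟪a, (𝕜 ∙ e).reflection b⟫_𝕜 = 2 * (⟪a, e⟫_𝕜 * ⟪e, b⟫_𝕜) - ⟪a, b⟫_𝕜 := by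
    rw [Submodule.reflection_apply, Submodule.starProjection_unit_singleton 𝕜 he, two_smul,
      inner_sub_right, inner_add_right, inner_smul_right]
    ring
  calc 2 * ‖⟪a, e⟫_𝕜 * ⟪e, b⟫_𝕜‖ = ‖2 * (⟪a, e⟫_𝕜 * ⟪e, b⟫_𝕜)‖ := by
        rw [norm_mul (2 : 𝕜), RCLike.norm_two]
    _ ≤ ‖2 * (⟪a, e⟫_𝕜 * ⟪e, b⟫_𝕜) - ⟪a, b⟫_𝕜‖ + ‖⟪a, b⟫_𝕜‖ := norm_le_norm_sub_add _ _
    _ = ‖⟪a, (𝕜 ∙ e).reflection b⟫_𝕜‖ + ‖⟪a, b⟫_𝕜‖ := by rw [h_reflect]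
    _ ≤ ‖a‖ * ‖(𝕜 ∙ e).reflection b‖ + ‖⟪a, b⟫_𝕜‖ := by gcongr; exact norm_inner_le_norm _ _
    _ = ‖a‖ * ‖b‖ + ‖⟪a, b⟫_𝕜‖ := by rw [LinearIsometryEquiv.norm_map]

variable [CompleteSpace E]

theorem norm_apply_sq_add_norm_adjoint_apply_sq_le (T : E →L[𝕜] E) (x : E) :
    ‖T x‖ ^ 2 + ‖adjoint T x‖ ^ 2 ≤ ‖T * adjoint T + adjoint T * T‖ * ‖x‖ ^ 2 := by
  have h_sum :
      ‖T x‖ ^ 2 + ‖adjoint T x‖ ^ 2 = RCLike.re ⟪(T * adjoint T + adjoint T * T) x, x⟫_𝕜 := by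
    rw [apply_norm_sq_eq_inner_adjoint_left, apply_norm_sq_eq_inner_adjoint_left, adjoint_adjoint,
      add_apply, inner_add_left, map_add, add_comm]
    rfl
  calc ‖T x‖ ^ 2 + ‖adjoint T x‖ ^ 2 ≤ ‖(T * adjoint T + adjoint T * T) x‖ * ‖x‖ :=
        h_sum ▸ re_inner_le_norm _ _
    _ ≤ ‖T * adjoint T + adjoint T * T‖ * ‖x‖ * ‖x‖ := by gcongr; exact le_opNorm _ _
    _ = ‖T * adjoint T + adjoint T * T‖ * ‖x‖ ^ 2 := by ring

theorem norm_inner_apply_self_sq_le (T : E →L[𝕜] E) {x : E} (hx : ‖x‖ = 1) :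
    ‖⟪T x, x⟫_𝕜‖ ^ 2 ≤
      (1 / 2) * ‖⟪(T ^ 2) x, x⟫_𝕜‖ + (1 / 4) * ‖T * adjoint T + adjoint T * T‖ := by
  have h_buzano := two_mul_norm_inner_mul_inner_le (𝕜 := 𝕜) hx (T x) (adjoint T x)
  have h_cross : ⟪T x, adjoint T x⟫_𝕜 = ⟪(T ^ 2) x, x⟫_𝕜 := by
    rw [adjoint_inner_right, sq]
    rfl
  rw [adjoint_inner_right, h_cross, norm_mul, ← sq] at h_buzano
  have h_amgm : 2 * ‖T x‖ * ‖adjoint T x‖ ≤ ‖T x‖ ^ 2 + ‖adjoint T x‖ ^ 2 :=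
    two_mul_le_add_sq _ _
  have h_sum := norm_apply_sq_add_norm_adjoint_apply_sq_le T x
  rw [hx, one_pow, mul_one] at h_sum
  linarith

end InnerProductSpace

section NumericalRadius

variable {E : Type*} [NormedAddCommGroup E] [InnerProductSpace ℂ E]

theorem numRadius_nonneg (T : E →L[ℂ] E) : 0 ≤ numRadius T :=
  Real.sSup_nonneg <| by rintro _ ⟨x, -, rfl⟩; exact norm_nonneg _

theorem norm_inner_le_numRadius (T : E →L[ℂ] E) {x : E} (hx : ‖x‖ = 1) :
    ‖⟪T x, x⟫_ℂ‖ ≤ numRadius T := by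
  refine le_csSup ⟨‖T‖, ?_⟩ ⟨x, hx, rfl⟩
  rintro _ ⟨y, hy, rfl⟩
  calc ‖⟪T y, y⟫_ℂ‖ ≤ ‖T y‖ * ‖y‖ := norm_inner_le_norm _ _
    _ ≤ ‖T‖ * ‖y‖ * ‖y‖ := by gcongr; exact le_opNorm _ _
    _ = ‖T‖ := by rw [hy]; ring

theorem numRadius_le {T : E →L[ℂ] E} {c : ℝ} (hc : 0 ≤ c)
    (h : ∀ x : E, ‖x‖ = 1 → ‖⟪T x, x⟫_ℂ‖ ≤ c) : numRadius T ≤ c :=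
  Real.sSup_le (by rintro _ ⟨x, hx, rfl⟩; exact h x hx) hc

theorem numRadius_sq_le [CompleteSpace E] (T : E →L[ℂ] E) :
    numRadius T ^ 2 ≤
      (1 / 2) * numRadius (T ^ 2) + (1 / 4) * ‖T * adjoint T + adjoint T * T‖ := by
  set K := (1 / 2) * numRadius (T ^ 2) + (1 / 4) * ‖T * adjoint T + adjoint T * T‖
    with hK_def
  have hK : 0 ≤ K := by have := numRadius_nonneg (T ^ 2); positivity
  rw [← Real.le_sqrt (numRadius_nonneg T) hK]
  refine numRadius_le (Real.sqrt_nonneg K) fun x hx => ?_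
  rw [Real.le_sqrt (norm_nonneg _) hK]
  linarith [norm_inner_apply_self_sq_le T hx, norm_inner_le_numRadius (T ^ 2) hx]

end NumericalRadius

theorem numRadius_pow_two_r_ineq (T : H →L[ℂ] H) (r : ℝ) (hr : 1 ≤ r) :
    numRadius T ^ (2 * r) ≤
      (1 / 2) * numRadius (T ^ 2) ^ r +
        (1 / 2 ^ (r + 1)) * ‖T * adjoint T + adjoint T * T‖ ^ r := by
  set N := ‖T * adjoint T + adjoint T * T‖
  have hw₂ := numRadius_nonneg (T ^ 2)
  have hN : 0 ≤ N / 2 := by positivity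
  calc numRadius T ^ (2 * r) = (numRadius T ^ 2) ^ r := by
        rw [Real.rpow_mul (numRadius_nonneg T), Real.rpow_two]
    _ ≤ ((1 / 2) * numRadius (T ^ 2) + (1 / 2) * (N / 2)) ^ r := by
        gcongr
        linarith [numRadius_sq_le T]
    _ ≤ (1 / 2) * numRadius (T ^ 2) ^ r + (1 / 2) * (N / 2) ^ r := by
        simpa only [smul_eq_mul] using
          (convexOn_rpow hr).2 hw₂ hN (by norm_num) (by norm_num) (add_halves 1)
    _ = (1 / 2) * numRadius (T ^ 2) ^ r + (1 / 2 ^ (r + 1)) * N ^ r := by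
        rw [Real.div_rpow (norm_nonneg _) zero_le_two, Real.rpow_add_one two_ne_zero]
        ring
end
end

section
/- Let X, Y, Z, W be bounded operators on a complex Hilbert space H and let T = [[X, Y],[Z, W]] act on H ⊕ H. Then ‖T‖² ≤ max{‖X‖², ‖W‖²} + max{‖X‖, ‖W‖}·max{‖Y‖, ‖Z‖} + max{‖Y‖², ‖Z‖²} + w([[O, Z*W],[Y*X, O]]). -/
open scoped InnerProductSpace
open ContinuousLinearMap
noncomputable section
set_option synthInstance.maxHeartbeats 1000000
set_option maxHeartbeats 1000000

variable {H : Type*} [NormedAddCommGroup H] [InnerProductSpace ℂ H] [CompleteSpace H]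

/-! Write `u = (a, b)` and `S = [[0, Z* W], [Y* X, 0]]`. Then `⟪S u, u⟫ = ⟪W b, Z a⟫ + ⟪X a, Y b⟫`
collects exactly the cross terms of `‖T u‖² = ‖X a + Y b‖² + ‖Z a + W b‖²`, so
`‖T u‖² = ‖X a‖² + ‖W b‖² + ‖Y b‖² + ‖Z a‖² + 2 re ⟪S u, u⟫`. The squares are bounded by the two
maxima of squared norms times `‖u‖²`. Of `2 re ⟪S u, u⟫ ≤ 2 ‖⟪S u, u⟫‖`, one half is at most
`w(S) ‖u‖²`, the other, by Cauchy–Schwarz on both cross terms and `2 ‖a‖ ‖b‖ ≤ ‖u‖²`, at most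
`max ‖X‖ ‖W‖ * max ‖Y‖ ‖Z‖ * ‖u‖²`. -/

section

variable {𝕜 E F : Type*} [SeminormedAddCommGroup E] [SeminormedAddCommGroup F]

theorem ContinuousLinearMap.opNorm_sq_le_of_norm_apply_sq_le [NontriviallyNormedField 𝕜]
    [NormedSpace 𝕜 E] [NormedSpace 𝕜 F] (f : E →L[𝕜] F) {R : ℝ} (hR : 0 ≤ R)
    (h : ∀ x, ‖f x‖ ^ 2 ≤ R * ‖x‖ ^ 2) : ‖f‖ ^ 2 ≤ R := by
  have hf : ‖f‖ ≤ √R := f.opNorm_le_bound (Real.sqrt_nonneg R) fun x => by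
    rw [← Real.sqrt_sq (norm_nonneg x), ← Real.sqrt_mul hR]
    exact Real.le_sqrt_of_sq_le (h x)
  calc ‖f‖ ^ 2 ≤ √R ^ 2 := by gcongr
    _ = R := Real.sq_sqrt hR

theorem ContinuousLinearMap.norm_apply_sq_add_norm_apply_sq_le [NontriviallyNormedField 𝕜]
    [NormedSpace 𝕜 E] [NormedSpace 𝕜 F] (A B : E →L[𝕜] F) (x y : E) :
    ‖A x‖ ^ 2 + ‖B y‖ ^ 2 ≤ max (‖A‖ ^ 2) (‖B‖ ^ 2) * (‖x‖ ^ 2 + ‖y‖ ^ 2) := by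
  have hA : ‖A x‖ ^ 2 ≤ ‖A‖ ^ 2 * ‖x‖ ^ 2 := by
    rw [← mul_pow]; gcongr; exact A.le_opNorm x
  have hB : ‖B y‖ ^ 2 ≤ ‖B‖ ^ 2 * ‖y‖ ^ 2 := by
    rw [← mul_pow]; gcongr; exact B.le_opNorm y
  nlinarith [le_max_left (‖A‖ ^ 2) (‖B‖ ^ 2), le_max_right (‖A‖ ^ 2) (‖B‖ ^ 2),
    sq_nonneg ‖x‖, sq_nonneg ‖y‖]

theorem norm_inner_add_inner_le [RCLike 𝕜] [NormedSpace 𝕜 E] [InnerProductSpace 𝕜 F]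
    (X Y Z W : E →L[𝕜] F) (x y : E) :
    ‖⟪W y, Z x⟫_𝕜 + ⟪X x, Y y⟫_𝕜‖ ≤
      max ‖X‖ ‖W‖ * max ‖Y‖ ‖Z‖ * (‖x‖ ^ 2 + ‖y‖ ^ 2) := by
  set α := max ‖X‖ ‖W‖
  set β := max ‖Y‖ ‖Z‖
  have hbound {A B : E →L[𝕜] F} (hA : ‖A‖ ≤ α) (hB : ‖B‖ ≤ β) (v w : E) :
      ‖⟪A v, B w⟫_𝕜‖ ≤ α * β * (‖v‖ * ‖w‖) :=
    calc ‖⟪A v, B w⟫_𝕜‖ ≤ ‖A v‖ * ‖B w‖ := norm_inner_le_norm _ _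
      _ ≤ (α * ‖v‖) * (β * ‖w‖) := by
        gcongr
        exacts [A.le_of_opNorm_le hA v, B.le_of_opNorm_le hB w]
      _ = α * β * (‖v‖ * ‖w‖) := by ring
  calc ‖⟪W y, Z x⟫_𝕜 + ⟪X x, Y y⟫_𝕜‖ ≤ ‖⟪W y, Z x⟫_𝕜‖ + ‖⟪X x, Y y⟫_𝕜‖ := norm_add_le _ _
    _ ≤ α * β * (‖y‖ * ‖x‖) + α * β * (‖x‖ * ‖y‖) :=
      add_le_add (hbound (le_max_right _ _) (le_max_right _ _) y x)
        (hbound (le_max_left _ _) (le_max_left _ _) x y)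
    _ = α * β * (2 * ‖x‖ * ‖y‖) := by ring
    _ ≤ α * β * (‖x‖ ^ 2 + ‖y‖ ^ 2) := by gcongr; exact two_mul_le_add_sq _ _

end

section

variable {E : Type*} [NormedAddCommGroup E] [InnerProductSpace ℂ E]

theorem numRadius_bddAbove (T : E →L[ℂ] E) :
    BddAbove {r : ℝ | ∃ x : E, ‖x‖ = 1 ∧ r = ‖⟪T x, x⟫_ℂ‖} := by
  refine ⟨‖T‖, ?_⟩
  rintro r ⟨x, hx, rfl⟩
  simpa [hx] using (norm_inner_le_norm (T x) x).trans
    (mul_le_mul_of_nonneg_right (T.le_opNorm x) (norm_nonneg x))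

theorem norm_inner_apply_self_le_numRadius (T : E →L[ℂ] E) (u : E) :
    ‖⟪T u, u⟫_ℂ‖ ≤ numRadius T * ‖u‖ ^ 2 := by
  rcases eq_or_ne u 0 with rfl | hu
  · simp
  have hle := le_csSup (numRadius_bddAbove T) ⟨(‖u‖⁻¹ : ℂ) • u, norm_smul_inv_norm hu, rfl⟩
  have hscale : ‖⟪T ((‖u‖⁻¹ : ℂ) • u), (‖u‖⁻¹ : ℂ) • u⟫_ℂ‖ = ‖⟪T u, u⟫_ℂ‖ / ‖u‖ ^ 2 := by
    simp only [map_smul, inner_smul_left, inner_smul_right, norm_mul, norm_inv, RCLike.norm_conj,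
      Complex.norm_real, norm_norm]
    ring
  rwa [hscale, div_le_iff₀ (by positivity)] at hle

theorem blockOp_apply_fst (X Y Z W : E →L[ℂ] E) (u : WithLp 2 (E × E)) :
    (blockOp X Y Z W u).fst = X u.fst + Y u.snd := rfl

theorem blockOp_apply_snd (X Y Z W : E →L[ℂ] E) (u : WithLp 2 (E × E)) :
    (blockOp X Y Z W u).snd = Z u.fst + W u.snd := rfl

theorem inner_blockOp_adjoint_apply_self [CompleteSpace E] (X Y Z W : E →L[ℂ] E)
    (u : WithLp 2 (E × E)) :
    ⟪blockOp 0 (adjoint Z * W) (adjoint Y * X) 0 u, u⟫_ℂ =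
      ⟪W u.snd, Z u.fst⟫_ℂ + ⟪X u.fst, Y u.snd⟫_ℂ := by
  simp [WithLp.prod_inner_apply, blockOp_apply_fst, blockOp_apply_snd, adjoint_inner_left]

theorem norm_blockOp_apply_sq [CompleteSpace E] (X Y Z W : E →L[ℂ] E) (u : WithLp 2 (E × E)) :
    ‖blockOp X Y Z W u‖ ^ 2 =
      ‖X u.fst‖ ^ 2 + ‖W u.snd‖ ^ 2 + (‖Y u.snd‖ ^ 2 + ‖Z u.fst‖ ^ 2) +
      2 * RCLike.re ⟪blockOp 0 (adjoint Z * W) (adjoint Y * X) 0 u, u⟫_ℂ := by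
  rw [inner_blockOp_adjoint_apply_self, WithLp.prod_norm_sq_eq_of_L2, blockOp_apply_fst,
    blockOp_apply_snd, norm_add_sq (𝕜 := ℂ), norm_add_sq (𝕜 := ℂ), map_add,
    inner_re_symm (𝕜 := ℂ) (W _)]
  ring

theorem norm_blockOp_apply_sq_le [CompleteSpace E] (X Y Z W : E →L[ℂ] E)
    (u : WithLp 2 (E × E)) :
    ‖blockOp X Y Z W u‖ ^ 2 ≤
      (max (‖X‖ ^ 2) (‖W‖ ^ 2) + max ‖X‖ ‖W‖ * max ‖Y‖ ‖Z‖ + max (‖Y‖ ^ 2) (‖Z‖ ^ 2) +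
        numRadius (blockOp 0 (adjoint Z * W) (adjoint Y * X) 0)) * ‖u‖ ^ 2 := by
  set S := blockOp 0 (adjoint Z * W) (adjoint Y * X) 0
  have hdiag := norm_apply_sq_add_norm_apply_sq_le X W u.fst u.snd
  have hoffdiag := norm_apply_sq_add_norm_apply_sq_le Y Z u.snd u.fst
  have hre : RCLike.re ⟪S u, u⟫_ℂ ≤ ‖⟪S u, u⟫_ℂ‖ := RCLike.re_le_norm _
  have hnumRadius := norm_inner_apply_self_le_numRadius S u
  have hcross : ‖⟪S u, u⟫_ℂ‖ ≤ max ‖X‖ ‖W‖ * max ‖Y‖ ‖Z‖ * ‖u‖ ^ 2 := by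
    rw [inner_blockOp_adjoint_apply_self, WithLp.prod_norm_sq_eq_of_L2]
    exact norm_inner_add_inner_le X Y Z W _ _
  rw [norm_blockOp_apply_sq]
  rw [WithLp.prod_norm_sq_eq_of_L2] at hnumRadius hcross ⊢
  linarith

end

theorem norm_block_sq_ineq (X Y Z W : H →L[ℂ] H) :
    ‖blockOp X Y Z W‖ ^ 2 ≤
      max (‖X‖ ^ 2) (‖W‖ ^ 2) + max ‖X‖ ‖W‖ * max ‖Y‖ ‖Z‖ + max (‖Y‖ ^ 2) (‖Z‖ ^ 2) +
        numRadius (blockOp 0 (adjoint Z * W) (adjoint Y * X) 0) :=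
  (blockOp X Y Z W).opNorm_sq_le_of_norm_apply_sq_le
    (add_nonneg (by positivity) (numRadius_nonneg _)) (norm_blockOp_apply_sq_le X Y Z W)
end
end
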